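/- Let π be a minimal valid function. Suppose for every minimal valid function π', P(π) ⊆ P(π') implies P(π) = P(π'). Then π is a weak facet: for every valid (not necessarily minimal) function π*, P(π) ⊆ P(π*) implies P(π) = P(π*). (Hypothesis: every valid function π* is pointwise dominated by some minimal valid function π' ≤ π*, and then P(π*) ⊆ P(π').) -/

import Mathlib

/-!
Dominate the valid `πs` by a minimal `π' ≤ πs`. Minimal functions are valid, so any `y` tight
for `πs` is tight for `π'`, giving `P(π) ⊆ P(πs) ⊆ P(π')`; the comparison hypothesis turns the
outer inclusion into an equality, which squeezes `P(πs)` to `P(π)`.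
-/

/-- Minimal valid function for the Gomory–Johnson infinite group problem with parameter `f`. -/
def MinimalValid (f : ℝ) (π : ℝ → ℝ) : Prop :=
  (∀ x, 0 ≤ π x) ∧ π 0 = 0 ∧ (∀ x y, π (x + y) ≤ π x + π y) ∧
  (∀ x, π (x + 1) = π x) ∧ (∀ x, π x + π (f - x) = 1)

/-- Additivity domain. -/
def Eset (π : ℝ → ℝ) : Set (ℝ × ℝ) := {p | π p.1 + π p.2 = π (p.1 + p.2)}

/-- `P(π)`: finite-support ℤ₊-valued functions with ∑ r·y(r) ≡ f (mod 1) and ∑ π(r)·y(r) = 1. -/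
def Pset (f : ℝ) (π : ℝ → ℝ) : Set (ℝ →₀ ℕ) :=
  {y | (∃ z : ℤ, (y.sum fun r n => r * (n : ℝ)) = f + z) ∧
       (y.sum fun r n => π r * (n : ℝ)) = 1}

/-- Valid function. -/
def ValidFn (f : ℝ) (π : ℝ → ℝ) : Prop :=
  (∀ x, 0 ≤ π x) ∧
  ∀ y : ℝ →₀ ℕ, (∃ z : ℤ, (y.sum fun r n => r * (n : ℝ)) = f + z) →
    1 ≤ (y.sum fun r n => π r * (n : ℝ))

theorem le_mul_natCast_of_subadditive {π : ℝ → ℝ} (h0 : π 0 = 0)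
    (hsub : ∀ x y, π (x + y) ≤ π x + π y) (r : ℝ) (n : ℕ) : π (r * n) ≤ π r * n := by
  have key := Finset.le_sum_of_subadditive π h0.le hsub (Finset.range n) fun _ => r
  simpa only [Finset.sum_const, Finset.card_range, nsmul_eq_mul, mul_comm] using key

theorem le_finsuppSum_of_subadditive {π : ℝ → ℝ} (h0 : π 0 = 0)
    (hsub : ∀ x y, π (x + y) ≤ π x + π y) (y : ℝ →₀ ℕ) :
    π (y.sum fun r n => r * (n : ℝ)) ≤ y.sum fun r n => π r * (n : ℝ) :=
  (Finset.le_sum_of_subadditive π h0.le hsub _ _).trans <|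
    Finset.sum_le_sum fun r _ => le_mul_natCast_of_subadditive h0 hsub r (y r)

namespace MinimalValid

variable {f : ℝ} {π : ℝ → ℝ}

theorem map_add_int (hπ : MinimalValid f π) (x : ℝ) (z : ℤ) : π (x + z) = π x := by
  simpa using (Function.Periodic.int_mul hπ.2.2.2.1 z) x

theorem map_f (hπ : MinimalValid f π) : π f = 1 := by
  simpa [hπ.2.1] using hπ.2.2.2.2 0

theorem validFn (hπ : MinimalValid f π) : ValidFn f π := by
  refine ⟨hπ.1, ?_⟩
  rintro y ⟨z, hz⟩
  have key := le_finsuppSum_of_subadditive hπ.2.1 hπ.2.2.1 y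
  rwa [hz, hπ.map_add_int, hπ.map_f] at key

end MinimalValid

theorem Pset_subset_of_le {f : ℝ} {π πs : ℝ → ℝ} (hπ : ValidFn f π) (hle : ∀ x, π x ≤ πs x) :
    Pset f πs ⊆ Pset f π := by
  rintro y ⟨hy, hsum⟩
  refine ⟨hy, le_antisymm ?_ (hπ.2 y hy)⟩
  calc (y.sum fun r n => π r * (n : ℝ)) ≤ y.sum fun r n => πs r * (n : ℝ) :=
        Finset.sum_le_sum fun r _ => mul_le_mul_of_nonneg_right (hle r) (Nat.cast_nonneg _)
    _ = 1 := hsum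

theorem weak_facet_from_minimal_comparisons_general (f : ℝ)
    (π : ℝ → ℝ)
    (hmin : ∀ π' : ℝ → ℝ, MinimalValid f π' → Pset f π ⊆ Pset f π' → Pset f π = Pset f π')
    (hdom : ∀ πs : ℝ → ℝ, ValidFn f πs →
      ∃ π' : ℝ → ℝ, MinimalValid f π' ∧ ∀ x, π' x ≤ πs x) :
    ∀ πs : ℝ → ℝ, ValidFn f πs → Pset f π ⊆ Pset f πs → Pset f π = Pset f πs := by
  intro πs hπs hsub
  obtain ⟨π', hπ', hle⟩ := hdom πs hπs
  have hs' : Pset f πs ⊆ Pset f π' := Pset_subset_of_le hπ'.validFn hle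
  have heq : Pset f π = Pset f π' := hmin π' hπ' (hsub.trans hs')
  exact hsub.antisymm (heq ▸ hs')

theorem weak_facet_from_minimal_comparisons (f : ℝ) (hf : ∀ z : ℤ, f ≠ z)
    (π : ℝ → ℝ) (hπ : MinimalValid f π)
    (hmin : ∀ π' : ℝ → ℝ, MinimalValid f π' → Pset f π ⊆ Pset f π' → Pset f π = Pset f π')
    (hdom : ∀ πs : ℝ → ℝ, ValidFn f πs →
      ∃ π' : ℝ → ℝ, MinimalValid f π' ∧ ∀ x, π' x ≤ πs x) :
    ∀ πs : ℝ → ℝ, ValidFn f πs → Pset f π ⊆ Pset f πs → Pset f π = Pset f πs :=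
  weak_facet_from_minimal_comparisons_general f π hmin hdom
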